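/- Let d ≥ 1, let G_1,…,G_d̄ be a partition of {1,…,d} into nonempty disjoint groups, let α ∈ ℝ^d̄ have strictly positive entries, and let p, q, s, t ∈ [1,∞] satisfy 1/p + 1/q = 1 and 1/s + 1/t = 1. Let e be a real random variable and X a random vector in ℝ^d, independent of each other, both with finite second moments, with σ² = E[e²] and E[e²] − (E[|e|])² > 0, and fix β* ∈ ℝ^d. Then for every z ∈ ℝ^d, sup_{ζ ∈ ℝ^d} { 2σ·ζᵀz − E[ ‖eζ − (ζᵀX)β*‖_{α-(p,s)}² ] } ≤ σ²·‖z‖_{α⁻¹-(q,t)}² / ( E[e²] − (E[|e|])² ). -/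

import Mathlib

open scoped ENNReal BigOperators
open MeasureTheory Filter

/-- The l_p norm (p ∈ [1,∞], with sup modification at p = ∞) of a finite real vector. -/
noncomputable def lpn (p : ℝ≥0∞) {ι : Type} [Fintype ι] (x : ι → ℝ) : ℝ :=
  ‖(WithLp.equiv p (ι → ℝ)).symm x‖

/-- The α-(p,s) groupwise norm: ‖x‖ = ( Σ_i α_i^s ‖x(G_i)‖_p^s )^{1/s}. -/
noncomputable def gnorm {d dbar : ℕ} (G : Fin dbar → Finset (Fin d)) (α : Fin dbar → ℝ)
    (p s : ℝ≥0∞) (x : Fin d → ℝ) : ℝ :=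
  lpn s (fun i => α i * lpn p (fun j : {k // k ∈ G i} => x j.1))

/-- G_1, …, G_d̄ form a partition of {1,…,d} into nonempty disjoint groups. -/
def IsPartition {d dbar : ℕ} (G : Fin dbar → Finset (Fin d)) : Prop :=
  (∀ i, (G i).Nonempty) ∧ (∀ i j, i ≠ j → Disjoint (G i) (G j)) ∧ (∀ k, ∃ i, k ∈ G i)

/-!
Write `A = ‖ζ‖_{α-(p,s)}`, `B = ‖β*‖_{α-(p,s)}`, `v = ζᵀX` and `Z = ‖z‖_{α⁻¹-(q,t)}`.
By the reverse triangle inequality `‖eζ - vβ*‖ ≥ |A|e| - B|v||`, so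
`E‖eζ - vβ*‖² ≥ E[(A|e| - B|v|)²] ≥ Var(A|e| - B|v|) = A² Var|e| + B² Var|v| ≥ A² Var|e|`,
the middle equality by independence of `e` and `X`. Group-wise Hölder gives `ζᵀz ≤ A Z`, and
`2σZA - Var|e| A² ≤ σ²Z² / Var|e|` is a completed square.
-/

section Lp

variable {ι : Type} [Fintype ι] {p q : ℝ≥0∞}

theorem PiLp.norm_toLp_eq_of_norm_eq {β γ : ι → Type*} [∀ i, Norm (β i)] [∀ i, Norm (γ i)]
    {f : ∀ i, β i} {g : ∀ i, γ i} (h : ∀ i, ‖f i‖ = ‖g i‖) :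
    ‖WithLp.toLp p f‖ = ‖WithLp.toLp p g‖ := by
  simp only [Norm.norm, h]

theorem lpn_eq_sum (hp : 0 < p.toReal) (u : ι → ℝ) :
    lpn p u = (∑ i, |u i| ^ p.toReal) ^ (1 / p.toReal) := by
  simp [lpn, PiLp.norm_eq_sum hp]

theorem sum_mul_le_lpn_top_mul_lpn_one (u v : ι → ℝ) : ∑ i, u i * v i ≤ lpn ∞ u * lpn 1 v := by
  rw [lpn, lpn, PiLp.norm_eq_of_L1, Finset.mul_sum]
  refine Finset.sum_le_sum fun i _ => ?_
  calc u i * v i ≤ |u i| * |v i| := by rw [← abs_mul]; exact le_abs_self _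
    _ ≤ _ := mul_le_mul_of_nonneg_right (PiLp.norm_apply_le (WithLp.toLp ∞ u) i) (abs_nonneg _)

theorem sum_mul_le_lpn_mul_lpn [p.HolderConjugate q] (u v : ι → ℝ) :
    ∑ i, u i * v i ≤ lpn p u * lpn q v := by
  by_cases hp : p = ∞
  · obtain rfl : q = 1 := (ENNReal.HolderConjugate.eq_top_iff_eq_one p q).1 hp
    subst hp
    exact sum_mul_le_lpn_top_mul_lpn_one u v
  by_cases hq : q = ∞
  · obtain rfl : p = 1 := (ENNReal.HolderConjugate.eq_top_iff_eq_one q p).1 hq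
    subst hq
    simpa only [mul_comm] using sum_mul_le_lpn_top_mul_lpn_one v u
  have hpq := ENNReal.HolderConjugate.toReal_of_ne_top hp hq
  rw [lpn_eq_sum hpq.pos, lpn_eq_sum hpq.symm.pos]
  exact Real.inner_le_Lp_mul_Lq _ _ _ hpq

end Lp

section GroupNorm

variable {d dbar : ℕ} (G : Fin dbar → Finset (Fin d)) (α : Fin dbar → ℝ) (p s : ℝ≥0∞)

variable {G} in
theorem IsPartition.sum_eq_sum_sum (hG : IsPartition G) {M : Type*} [AddCommMonoid M]
    (f : Fin d → M) : ∑ k, f k = ∑ i, ∑ k ∈ G i, f k := by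
  classical
  have hcover : Finset.univ.biUnion G = Finset.univ :=
    Finset.eq_univ_iff_forall.mpr fun k => by simpa using hG.2.2 k
  rw [← Finset.sum_biUnion fun i _ j _ hij => hG.2.1 i j hij, hcover]

noncomputable def groupEmbedding :
    (Fin d → ℝ) →ₗ[ℝ] PiLp s (fun i => PiLp p (fun _ : {k // k ∈ G i} => ℝ)) where
  toFun x := WithLp.toLp s fun i => α i • WithLp.toLp p fun j => x j.1
  map_add' x y := by
    ext i j
    exact mul_add _ _ _
  map_smul' c x := by
    ext i j
    exact mul_left_comm _ _ _

theorem gnorm_eq_norm_groupEmbedding [Fact (1 ≤ p)] (x : Fin d → ℝ) :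
    gnorm G α p s x = ‖groupEmbedding G α p s x‖ := by
  refine PiLp.norm_toLp_eq_of_norm_eq fun i => ?_
  rw [norm_smul, norm_mul, lpn, norm_norm]
  rfl

variable {G α p s} in
theorem sum_mul_le_gnorm_mul_gnorm_inv (hG : IsPartition G) (hα : ∀ i, α i ≠ 0) {q t : ℝ≥0∞}
    [p.HolderConjugate q] [s.HolderConjugate t] (x z : Fin d → ℝ) :
    ∑ k, x k * z k ≤ gnorm G α p s x * gnorm G (fun i => (α i)⁻¹) q t z := by
  calc ∑ k, x k * z k = ∑ i, ∑ j : {k // k ∈ G i}, x j * z j := by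
        rw [hG.sum_eq_sum_sum]
        exact Finset.sum_congr rfl fun i _ => (Finset.sum_coe_sort (G i) _).symm
    _ ≤ ∑ i, (α i * lpn p fun j : {k // k ∈ G i} => x j) *
          ((α i)⁻¹ * lpn q fun j : {k // k ∈ G i} => z j) := by
        gcongr with i
        rw [mul_mul_mul_comm, mul_inv_cancel₀ (hα i), one_mul]
        exact sum_mul_le_lpn_mul_lpn _ _
    _ ≤ _ := sum_mul_le_lpn_mul_lpn _ _

end GroupNorm

section Moments

open ProbabilityTheory

variable {Ω : Type*} [MeasurableSpace Ω] {P : Measure Ω}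

theorem memLp_two_sum_mul {ι : Type*} [Fintype ι] {X : Ω → ι → ℝ} (hXm : Measurable X)
    (hX2 : ∀ k, Integrable (fun ω => X ω k * X ω k) P) (ζ : ι → ℝ) :
    MemLp (fun ω => ∑ l, ζ l * X ω l) 2 P := by
  refine memLp_finsetSum _ fun l _ => MemLp.const_mul ?_ (ζ l)
  have hXl : Measurable fun ω => X ω l := (measurable_pi_apply l).comp hXm
  refine (memLp_two_iff_integrable_sq hXl.aestronglyMeasurable).2 ?_
  simpa only [sq] using hX2 l

variable [IsProbabilityMeasure P]

theorem variance_abs_eq_integral_sq_sub {e : Ω → ℝ} (he : MemLp e 2 P) :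
    Var[fun ω => |e ω|; P] = ∫ ω, e ω ^ 2 ∂P - (∫ ω, |e ω| ∂P) ^ 2 := by
  rw [variance_eq_sub (X := fun ω => |e ω|) he.abs]
  simp only [Pi.pow_apply, sq_abs]

theorem variance_abs_mul_sq_norm_le_integral_norm_sub_sq {E : Type*} [NormedAddCommGroup E]
    [NormedSpace ℝ E] {e v : Ω → ℝ} (he : MemLp e 2 P) (hv : MemLp v 2 P)
    (hind : IndepFun e v P) (a b : E) :
    Var[fun ω => |e ω|; P] * ‖a‖ ^ 2 ≤ ∫ ω, ‖e ω • a - v ω • b‖ ^ 2 ∂P := by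
  have hea : MemLp (fun ω => ‖a‖ * |e ω|) 2 P := he.abs.const_mul ‖a‖
  have hvb : MemLp (fun ω => ‖b‖ * |v ω|) 2 P := hv.abs.const_mul ‖b‖
  have hindep : IndepFun (fun ω => ‖a‖ * |e ω|) (fun ω => ‖b‖ * |v ω|) P :=
    hind.comp (measurable_const.mul measurable_abs) (measurable_const.mul measurable_abs)
  have hlower : ∀ ω, (‖a‖ * |e ω| - ‖b‖ * |v ω|) ^ 2 ≤ ‖e ω • a - v ω • b‖ ^ 2 := fun ω => by
    rw [← sq_abs]
    gcongr
    simpa only [norm_smul, Real.norm_eq_abs, mul_comm] using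
      abs_norm_sub_norm_le (e ω • a) (v ω • b)
  have hupper : ∀ ω, ‖e ω • a - v ω • b‖ ≤ ‖a‖ * |e ω| + ‖b‖ * |v ω| := fun ω => by
    simpa only [norm_smul, Real.norm_eq_abs, mul_comm] using norm_sub_le (e ω • a) (v ω • b)
  have hint : Integrable (fun ω => ‖e ω • a - v ω • b‖ ^ 2) P := by
    refine (hea.add hvb).integrable_sq.mono'
      (((he.1.smul_const a).sub (hv.1.smul_const b)).norm.pow 2) (ae_of_all _ fun ω => ?_)
    rw [Real.norm_eq_abs, abs_pow, abs_norm]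
    exact pow_le_pow_left₀ (norm_nonneg _) (hupper ω) 2
  calc Var[fun ω => |e ω|; P] * ‖a‖ ^ 2 = Var[fun ω => ‖a‖ * |e ω|; P] := by
        rw [variance_const_mul, mul_comm]
    _ ≤ Var[fun ω => ‖a‖ * |e ω|; P] + Var[fun ω => ‖b‖ * |v ω|; P] :=
        le_add_of_nonneg_right (variance_nonneg _ _)
    _ = Var[fun ω => ‖a‖ * |e ω| - ‖b‖ * |v ω|; P] := by
        rw [variance_fun_sub hea hvb, hindep.covariance_eq_zero hea hvb]
        ring
    _ ≤ ∫ ω, (‖a‖ * |e ω| - ‖b‖ * |v ω|) ^ 2 ∂P :=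
        variance_le_expectation_sq (hea.sub hvb).aestronglyMeasurable
    _ ≤ ∫ ω, ‖e ω • a - v ω • b‖ ^ 2 ∂P := integral_mono (hea.sub hvb).integrable_sq hint hlower

end Moments

theorem two_mul_mul_sub_mul_sq_le_sq_div {x y c : ℝ} (hc : 0 < c) :
    2 * x * y - c * y ^ 2 ≤ x ^ 2 / c := by
  rw [le_div_iff₀ hc]
  nlinarith [sq_nonneg (x - c * y)]

theorem statement13_general {d dbar : ℕ}
    (G : Fin dbar → Finset (Fin d)) (hG : IsPartition G)
    (α : Fin dbar → ℝ) (hα : ∀ i, 0 < α i)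
    (p q s t : ℝ≥0∞)
    (hpq : 1 / p + 1 / q = 1) (hst : 1 / s + 1 / t = 1)
    {Ω : Type} [MeasurableSpace Ω] (P : Measure Ω) [IsProbabilityMeasure P]
    (e : Ω → ℝ) (X : Ω → Fin d → ℝ)
    (hem : Measurable e) (hXm : Measurable X)
    (hindep : ProbabilityTheory.IndepFun X e P)
    (he2 : Integrable (fun ω => e ω ^ 2) P)
    (hX2 : ∀ k l, Integrable (fun ω => X ω k * X ω l) P)
    (σ : ℝ) (hσnn : 0 ≤ σ)
    (hvar : 0 < (∫ ω, e ω ^ 2 ∂P) - (∫ ω, |e ω| ∂P) ^ 2)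
    (βstar : Fin d → ℝ) (z : Fin d → ℝ) :
    (⨆ ζ : Fin d → ℝ,
        (2 * σ * ∑ k, ζ k * z k -
          ∫ ω, (gnorm G α p s (fun k => e ω * ζ k - (∑ l, ζ l * X ω l) * βstar k)) ^ 2 ∂P))
      ≤ σ ^ 2 * (gnorm G (fun i => (α i)⁻¹) q t z) ^ 2 /
          ((∫ ω, e ω ^ 2 ∂P) - (∫ ω, |e ω| ∂P) ^ 2) := by
  have : p.HolderConjugate q := ENNReal.holderConjugate_iff.2 (by simpa only [one_div] using hpq)
  have : s.HolderConjugate t := ENNReal.holderConjugate_iff.2 (by simpa only [one_div] using hst)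
  have : Fact (1 ≤ p) := ⟨ENNReal.HolderConjugate.one_le p q⟩
  have : Fact (1 ≤ s) := ⟨ENNReal.HolderConjugate.one_le s t⟩
  have he : MemLp e 2 P := (memLp_two_iff_integrable_sq hem.aestronglyMeasurable).2 he2
  set T := groupEmbedding G α p s
  set Z := gnorm G (fun i => (α i)⁻¹) q t z
  rw [← variance_abs_eq_integral_sq_sub he] at hvar ⊢
  refine ciSup_le fun ζ => ?_
  have hv := memLp_two_sum_mul hXm (fun k => hX2 k k) ζ
  have hφ : Measurable fun x : Fin d → ℝ => ∑ l, ζ l * x l := by fun_prop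
  have hind : ProbabilityTheory.IndepFun e (fun ω => ∑ l, ζ l * X ω l) P :=
    (hindep.comp hφ measurable_id).symm
  have hnorm : ∀ ω, gnorm G α p s (fun k => e ω * ζ k - (∑ l, ζ l * X ω l) * βstar k) =
      ‖e ω • T ζ - (∑ l, ζ l * X ω l) • T βstar‖ := fun ω => by
    rw [gnorm_eq_norm_groupEmbedding, ← map_smul, ← map_smul, ← map_sub]
    rfl
  have hHolder : ∑ k, ζ k * z k ≤ ‖T ζ‖ * Z := by
    rw [← gnorm_eq_norm_groupEmbedding]
    exact sum_mul_le_gnorm_mul_gnorm_inv hG (fun i => (hα i).ne') ζ z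
  simp_rw [hnorm]
  calc _ ≤ 2 * σ * (‖T ζ‖ * Z) - ProbabilityTheory.variance (fun ω => |e ω|) P * ‖T ζ‖ ^ 2 :=
        sub_le_sub (by gcongr)
          (variance_abs_mul_sq_norm_le_integral_norm_sub_sq he hv hind (T ζ) (T βstar))
    _ = 2 * (σ * Z) * ‖T ζ‖ - ProbabilityTheory.variance (fun ω => |e ω|) P * ‖T ζ‖ ^ 2 := by
        ring
    _ ≤ _ := (two_mul_mul_sub_mul_sq_le_sq_div hvar).trans_eq (by ring)

theorem statement13 {d dbar : ℕ} (hd : 1 ≤ d)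
    (G : Fin dbar → Finset (Fin d)) (hG : IsPartition G)
    (α : Fin dbar → ℝ) (hα : ∀ i, 0 < α i)
    (p q s t : ℝ≥0∞) (hp : 1 ≤ p) (hq : 1 ≤ q) (hs : 1 ≤ s) (ht : 1 ≤ t)
    (hpq : 1 / p + 1 / q = 1) (hst : 1 / s + 1 / t = 1)
    {Ω : Type} [MeasurableSpace Ω] (P : Measure Ω) [IsProbabilityMeasure P]
    (e : Ω → ℝ) (X : Ω → Fin d → ℝ)
    (hem : Measurable e) (hXm : Measurable X)
    (hindep : ProbabilityTheory.IndepFun X e P)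
    (he2 : Integrable (fun ω => e ω ^ 2) P)
    (hX2 : ∀ k l, Integrable (fun ω => X ω k * X ω l) P)
    (σ : ℝ) (hσnn : 0 ≤ σ) (hσ : σ ^ 2 = ∫ ω, e ω ^ 2 ∂P)
    (hvar : 0 < (∫ ω, e ω ^ 2 ∂P) - (∫ ω, |e ω| ∂P) ^ 2)
    (βstar : Fin d → ℝ) (z : Fin d → ℝ) :
    (⨆ ζ : Fin d → ℝ,
        (2 * σ * ∑ k, ζ k * z k -
          ∫ ω, (gnorm G α p s (fun k => e ω * ζ k - (∑ l, ζ l * X ω l) * βstar k)) ^ 2 ∂P))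
      ≤ σ ^ 2 * (gnorm G (fun i => (α i)⁻¹) q t z) ^ 2 /
          ((∫ ω, e ω ^ 2 ∂P) - (∫ ω, |e ω| ∂P) ^ 2) :=
  statement13_general G hG α hα p q s t hpq hst P e X hem hXm hindep he2 hX2 σ hσnn hvar βstar z
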